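/- arXiv:0709.4393 — 5 statements merged into one kernel-verified Lean document; each statement's English description precedes it below -/
import Mathlib

section
/- Let F be the free group on the 2k generators a_1, b_1, …, a_k, b_k (k ≥ 1) and let R ∈ F. Then there exist elements a′, b′ ∈ F and a group homomorphism φ : F → ℤ such that: (i) a′ and b′ lie in, and generate, the subgroup of F generated by a_k and b_k; (ii) the family (a_1, b_1, …, a_{k−1}, b_{k−1}, a′, b′) is a free basis of F; (iii) [a′, b′] = [a_k, b_k]; (iv) φ(a′) = 1, φ(b′) = 0, and φ(a_i) = φ(b_i) = 0 for all 1 ≤ i ≤ k−1; and (v) φ(R) = 0 (i.e. as a reduced word in the new basis, R has exponent sum zero in a′). -/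
/-!
The Nielsen transvections `a_k ↦ a_k b_k ^ t` and `b_k ↦ b_k a_k ^ t` are automorphisms of `F`
that fix the other generators, preserve `⟨a_k, b_k⟩` and fix `[a_k, b_k]`; hence so does every
`f` in the group they generate, and `a' = f⁻¹ a_k`, `b' = f⁻¹ b_k`, `φ = (exponent sum in a_k) ∘ f`
satisfy (i)–(iv). On the exponent sums `(p, q)` of `f R` in `a_k` and `b_k` the transvections act
by the elementary operations `(p, q + t p)` and `(p + t q, q)`, and Euclid's algorithm with these
reaches `p = 0`, which is (v).
-/

open scoped commutatorElement Pointwise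

lemma Int.exists_mem_fst_eq_zero_of_closed {S : Set (ℤ × ℤ)}
    (hS₁ : ∀ p q t : ℤ, (p, q) ∈ S → (p, q + t * p) ∈ S)
    (hS₂ : ∀ p q t : ℤ, (p, q) ∈ S → (p + t * q, q) ∈ S) {p q : ℤ} (h : (p, q) ∈ S) :
    ∃ q', (0, q') ∈ S := by
  induction hn : p.natAbs using Nat.strong_induction_on generalizing p q with
  | _ n ih =>
    rcases eq_or_ne p 0 with rfl | hp
    · exact ⟨q, h⟩
    -- one step of Euclid's algorithm
    have h₁ : (p, q % p + p) ∈ S := by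
      convert hS₁ p q (1 - q / p) h using 2
      rw [Int.emod_def]
      ring
    have h₂ : (-(q % p), q % p + p) ∈ S := by
      simpa using hS₂ _ _ (-1) h₁
    refine ih _ ?_ h₂ rfl
    have := Int.emod_nonneg q hp
    have := Int.emod_lt_abs q hp
    rw [Int.abs_eq_natAbs] at this
    omega

lemma Subgroup.closure_pair_mul_zpow {G : Type*} [Group G] (a b : G) (t : ℤ) :
    closure {a * b ^ t, b} = closure {a, b} := by
  have hb : b ∈ closure {a, b} := subset_closure (by simp)
  have hb' : b ∈ closure {a * b ^ t, b} := subset_closure (by simp)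
  apply le_antisymm <;> rw [closure_le, Set.pair_subset_iff]
  · exact ⟨mul_mem (subset_closure (by simp)) (zpow_mem hb t), hb⟩
  · refine ⟨?_, hb'⟩
    simpa using mul_mem (subset_closure (Set.mem_insert _ _)) (zpow_mem hb' (-t))

namespace FreeGroup

section Stabilizer

variable {α : Type*} {x y : α}

def handleStabilizer (x y : α) : Subgroup (MulAut (FreeGroup α)) :=
  (⨅ (z : α) (_ : z ≠ x) (_ : z ≠ y), MulAction.stabilizer _ (of z)) ⊓
    MulAction.stabilizer _ (Subgroup.closure {of x, of y}) ⊓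
    MulAction.stabilizer _ ⁅of x, of y⁆

lemma mem_handleStabilizer {f : MulAut (FreeGroup α)} :
    f ∈ handleStabilizer x y ↔ (∀ z, z ≠ x → z ≠ y → f (of z) = of z) ∧
      Subgroup.closure {f (of x), f (of y)} = Subgroup.closure {of x, of y} ∧
      ⁅f (of x), f (of y)⁆ = ⁅of x, of y⁆ := by
  simp [handleStabilizer, Subgroup.mem_iInf, MulAction.mem_stabilizer_iff, Subgroup.smul_closure,
    Set.smul_set_insert, Set.smul_set_singleton, MulAut.smul_def, map_commutatorElement, and_assoc]

end Stabilizer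

variable {α : Type*} [DecidableEq α] {x y : α}

def transvectionHom (x y : α) (t : ℤ) : FreeGroup α →* FreeGroup α :=
  lift (Function.update of x (of x * of y ^ t))

@[simp]
lemma transvectionHom_of_self (t : ℤ) : transvectionHom x y t (of x) = of x * of y ^ t := by
  simp [transvectionHom]

@[simp]
lemma transvectionHom_of_of_ne {z : α} (t : ℤ) (hz : z ≠ x) :
    transvectionHom x y t (of z) = of z := by
  simp [transvectionHom, hz]

lemma transvectionHom_comp (hxy : x ≠ y) (s t : ℤ) :
    (transvectionHom x y s).comp (transvectionHom x y t) = transvectionHom x y (s + t) := by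
  ext z
  by_cases hz : z = x
  · subst hz
    simp [hxy.symm, zpow_add, mul_assoc]
  · simp [hz]

lemma transvectionHom_zero : transvectionHom x y 0 = MonoidHom.id (FreeGroup α) := by
  ext z
  by_cases hz : z = x
  · subst hz; simp
  · simp [hz]

def transvection (hxy : x ≠ y) (t : ℤ) : MulAut (FreeGroup α) :=
  (transvectionHom x y t).toMulEquiv (transvectionHom x y (-t))
    (by rw [transvectionHom_comp hxy, neg_add_cancel, transvectionHom_zero])
    (by rw [transvectionHom_comp hxy, add_neg_cancel, transvectionHom_zero])

@[simp]
lemma transvection_apply (hxy : x ≠ y) (t : ℤ) (w : FreeGroup α) :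
    transvection hxy t w = transvectionHom x y t w := rfl

lemma transvection_mem_handleStabilizer (hxy : x ≠ y) (t : ℤ) :
    transvection hxy t ∈ handleStabilizer x y := by
  refine mem_handleStabilizer.2 ⟨fun z hzx _ => by simp [hzx], ?_, ?_⟩
  · simpa [hxy.symm] using Subgroup.closure_pair_mul_zpow (of x) (of y) t
  · simp only [transvection_apply, transvectionHom_of_self, transvectionHom_of_of_ne t hxy.symm,
      commutatorElement_def]
    group

lemma transvection_symm_mem_handleStabilizer (hxy : x ≠ y) (t : ℤ) :
    transvection hxy.symm t ∈ handleStabilizer x y := by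
  refine mem_handleStabilizer.2 ⟨fun z _ hzy => by simp [hzy], ?_, ?_⟩
  · simpa [hxy, Set.pair_comm] using Subgroup.closure_pair_mul_zpow (of y) (of x) t
  · simp only [transvection_apply, transvectionHom_of_self, transvectionHom_of_of_ne t hxy,
      commutatorElement_def]
    group

def expSum (x : α) : FreeGroup α →* Multiplicative ℤ :=
  lift (Pi.mulSingle x (Multiplicative.ofAdd 1))

@[simp]
lemma expSum_of_self (x : α) : expSum x (of x) = Multiplicative.ofAdd 1 := by
  simp [expSum]

@[simp]
lemma expSum_of_of_ne {z : α} (hz : z ≠ x) : expSum x (of z) = 1 := by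
  simp [expSum, hz]

lemma expSum_transvection_self (hxy : x ≠ y) (t : ℤ) (w : FreeGroup α) :
    expSum x (transvection hxy t w) = expSum x w := by
  suffices (expSum x).comp (transvectionHom x y t) = expSum x from DFunLike.congr_fun this w
  ext z
  by_cases hz : z = x
  · subst hz; simp [hxy.symm]
  · simp [hz]

lemma expSum_transvection (hxy : x ≠ y) (t : ℤ) (w : FreeGroup α) :
    expSum y (transvection hxy t w) = expSum y w * expSum x w ^ t := by
  suffices (expSum y).comp (transvectionHom x y t) = expSum y * expSum x ^ t from
    DFunLike.congr_fun this w
  ext z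
  by_cases hz : z = x
  · subst hz; simp [hxy]
  · simp [hz]

lemma exists_mem_handleStabilizer_expSum_eq_one (hxy : x ≠ y) (w : FreeGroup α) :
    ∃ f ∈ handleStabilizer x y, expSum x (f w) = 1 := by
  let S : Set (ℤ × ℤ) := {v | ∃ f ∈ handleStabilizer x y,
    v = ((expSum x (f w)).toAdd, (expSum y (f w)).toAdd)}
  have hS₁ : ∀ p q t : ℤ, (p, q) ∈ S → (p, q + t * p) ∈ S := by
    rintro p q t ⟨f, hf, hv⟩
    refine ⟨transvection hxy t * f, mul_mem (transvection_mem_handleStabilizer hxy t) hf, ?_⟩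
    obtain ⟨rfl, rfl⟩ := Prod.mk.inj hv
    rw [MulAut.mul_apply, expSum_transvection_self, expSum_transvection, toAdd_mul, toAdd_zpow,
      smul_eq_mul, mul_comm t]
  have hS₂ : ∀ p q t : ℤ, (p, q) ∈ S → (p + t * q, q) ∈ S := by
    rintro p q t ⟨f, hf, hv⟩
    refine ⟨transvection hxy.symm t * f,
      mul_mem (transvection_symm_mem_handleStabilizer hxy t) hf, ?_⟩
    obtain ⟨rfl, rfl⟩ := Prod.mk.inj hv
    rw [MulAut.mul_apply, expSum_transvection_self, expSum_transvection, toAdd_mul, toAdd_zpow,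
      smul_eq_mul, mul_comm t]
  obtain ⟨q, f, hf, hfw⟩ := Int.exists_mem_fst_eq_zero_of_closed hS₁ hS₂ ⟨1, one_mem _, rfl⟩
  exact ⟨f, hf, by simpa using (Prod.ext_iff.1 hfw).1.symm⟩

lemma lift_lastHandle_eq {k : ℕ} (h : k - 1 < k) (g : MulAut (FreeGroup (Fin k × Bool)))
    (hg : ∀ z, z ≠ (⟨k - 1, h⟩, false) → z ≠ (⟨k - 1, h⟩, true) → g (of z) = of z) :
    lift (fun p : Fin k × Bool => if (p.1 : ℕ) < k - 1 then of p
      else if p.2 = false then g (of (⟨k - 1, h⟩, false)) else g (of (⟨k - 1, h⟩, true))) =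
      g.toMonoidHom := by
  ext ⟨i, b⟩
  by_cases hi : (i : ℕ) < k - 1
  · have hne : ∀ b', (i, b) ≠ (⟨k - 1, h⟩, b') := fun b' hib => by simp_all
    simp [hi, hg _ (hne false) (hne true)]
  · obtain rfl : i = ⟨k - 1, h⟩ := Fin.ext (by have := i.isLt; dsimp only; omega)
    cases b <;> simp

end FreeGroup

/-- Change of basis in the last handle. Let `F` be the free group on the `2k`
generators `a_1, b_1, …, a_k, b_k` (modelled on `Fin k × Bool`, with `(i, false) = a_{i+1}`
and `(i, true) = b_{i+1}`), and `R ∈ F`. Then there are `a', b' ∈ F` and a homomorphism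
`φ : F → ℤ` (written multiplicatively as `F →* Multiplicative ℤ`) such that:
(i) `a'` and `b'` lie in and generate the subgroup generated by `a_k` and `b_k`;
(ii) `a_1, b_1, …, a_{k-1}, b_{k-1}, a', b'` is a free basis of `F` (the induced
lift is bijective); (iii) `[a', b'] = [a_k, b_k]`; (iv) `φ(a') = 1`, `φ(b') = 0`,
`φ(a_i) = φ(b_i) = 0` for `i < k`; and (v) `φ(R) = 0`, i.e. `R` has exponent sum
zero in `a'` as a word in the new basis. -/
theorem exponent_sum_zero_basis (k : ℕ) (hk : 1 ≤ k) (R : FreeGroup (Fin k × Bool)) :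
    ∃ (a' b' : FreeGroup (Fin k × Bool)) (φ : FreeGroup (Fin k × Bool) →* Multiplicative ℤ),
      Subgroup.closure {a', b'} =
        Subgroup.closure {FreeGroup.of ((⟨k - 1, by omega⟩ : Fin k), false),
          FreeGroup.of ((⟨k - 1, by omega⟩ : Fin k), true)} ∧
      Function.Bijective
        ⇑(FreeGroup.lift (fun p : Fin k × Bool =>
          if (p.1 : ℕ) < k - 1 then FreeGroup.of p
          else if p.2 = false then a' else b')) ∧
      ⁅a', b'⁆ = ⁅FreeGroup.of ((⟨k - 1, by omega⟩ : Fin k), false),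
        FreeGroup.of ((⟨k - 1, by omega⟩ : Fin k), true)⁆ ∧
      φ a' = Multiplicative.ofAdd 1 ∧
      φ b' = 1 ∧
      (∀ p : Fin k × Bool, (p.1 : ℕ) < k - 1 → φ (FreeGroup.of p) = 1) ∧
      φ R = 1 := by
  have h : k - 1 < k := by omega
  set x : Fin k × Bool := (⟨k - 1, h⟩, false)
  set y : Fin k × Bool := (⟨k - 1, h⟩, true)
  have hxy : x ≠ y := by simp [x, y]
  obtain ⟨f, hf, hfR⟩ := FreeGroup.exists_mem_handleStabilizer_expSum_eq_one hxy R
  obtain ⟨hfix, -, -⟩ := FreeGroup.mem_handleStabilizer.1 hf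
  obtain ⟨hfix', hclosure, hcomm⟩ := FreeGroup.mem_handleStabilizer.1 (inv_mem hf)
  refine ⟨f⁻¹ (.of x), f⁻¹ (.of y), (FreeGroup.expSum x).comp f.toMonoidHom,
    hclosure, ?_, hcomm, ?_, ?_, ?_, hfR⟩
  · rw [FreeGroup.lift_lastHandle_eq h _ hfix']
    exact f⁻¹.bijective
  · simp
  · simp [hxy.symm]
  · intro p hp
    have hne : ∀ b, p ≠ (⟨k - 1, h⟩, b) := fun b hpb => by simp [hpb] at hp
    simpa [hfix p (hne false) (hne true)] using FreeGroup.expSum_of_of_ne (hne false)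
end

section
/- Let k ≥ 2 and 1 ≤ j ≤ k−1. Then the homomorphism from the free group on the 2j letters a_1, b_1, …, a_j, b_j to the genus-k surface group Σ_k, sending each of these letters to the image in Σ_k of the corresponding generator, is injective; that is, the subgroup P_j of Σ_k is freely generated by the images of a_1, b_1, …, a_j, b_j. -/
open scoped commutatorElement

/-- The surface relator `[a_1,b_1][a_2,b_2]⋯[a_k,b_k]` in the free group on
`Fin k × Bool`, where `(i, false)` represents `a_{i+1}` and `(i, true)` represents
`b_{i+1}`. -/
def surfRel (k : ℕ) : FreeGroup (Fin k × Bool) :=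
  (List.ofFn (fun i : Fin k => ⁅FreeGroup.of (i, false), FreeGroup.of (i, true)⁆)).prod

/-- The genus-`k` surface group `Σ_k`. -/
abbrev SurfaceGroup (k : ℕ) : Type :=
  FreeGroup (Fin k × Bool) ⧸ Subgroup.normalClosure {surfRel k}

/-- The image in `Σ_k` of the free generator indexed by `p`. -/
def sgen (k : ℕ) (p : Fin k × Bool) : SurfaceGroup k :=
  QuotientGroup.mk' (Subgroup.normalClosure {surfRel k}) (FreeGroup.of p)

/-- `P_j`: the subgroup of `Σ_k` generated by the images of `a_1, b_1, …, a_j, b_j`. -/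
def P (k j : ℕ) : Subgroup (SurfaceGroup k) :=
  Subgroup.closure (sgen k '' {p : Fin k × Bool | (p.1 : ℕ) < j})

/-- `Q_j`: the subgroup of `Σ_k` generated by the images of `a_{j+1}, b_{j+1}, …, a_k, b_k`. -/
def Q (k j : ℕ) : Subgroup (SurfaceGroup k) :=
  Subgroup.closure (sgen k '' {p : Fin k × Bool | j ≤ (p.1 : ℕ)})


/-!
Cutting the genus-`(j + m)` surface along the curve that separates the first `j` handles from
the last `m` exhibits `Σ_{j+m}` as the amalgamated product of the free groups on
`a_1, …, b_j` and on `a_{j+1}, …, b_{j+m}` over `ℤ`, embedded as `⟨[a_1,b_1]⋯[a_j,b_j]⟩` and as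
`⟨([a_{j+1},b_{j+1}]⋯[a_{j+m},b_{j+m}])⁻¹⟩`. For the argument only the map from `Σ_{j+m}` to this
amalgam is needed: composed with `F(a_1, …, b_j) → Σ_{j+m}` it is the inclusion of a factor.
That inclusion is injective because the edge maps are: free groups are torsion-free, and a
product of `j ≥ 1` handle commutators is nontrivial, as its image in `S_3` already shows.
-/

open Function

section TorsionFree

variable {G : Type*} [Group G] [IsMulTorsionFree G]

lemma zpowersHom_injective {g : G} (hg : g ≠ 1) : Injective (zpowersHom G g) :=
  (injective_zpow_iff_not_isOfFinOrder.mpr (not_isOfFinOrder_of_isMulTorsionFree hg)).comp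
    Multiplicative.toAdd.injective

end TorsionFree

lemma map_surfRel {G : Type*} [Group G] {k : ℕ} (f : FreeGroup (Fin k × Bool) →* G) :
    f (surfRel k) = (List.ofFn fun i => ⁅f (.of (i, false)), f (.of (i, true))⁆).prod := by
  simp only [surfRel, map_list_prod, List.map_ofFn, Function.comp_def, map_commutatorElement]

lemma surfRel_ne_one {k : ℕ} (hk : k ≠ 0) : surfRel k ≠ 1 := by
  obtain ⟨k, rfl⟩ := Nat.exists_eq_succ_of_ne_zero hk
  let f : FreeGroup (Fin (k + 1) × Bool) →* Equiv.Perm (Fin 3) := FreeGroup.lift fun p =>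
    if p.1 = 0 then (if p.2 then Equiv.swap 1 2 else Equiv.swap 0 1) else 1
  have hf : f (surfRel (k + 1)) = ⁅Equiv.swap (0 : Fin 3) 1, Equiv.swap 1 2⁆ := by
    simp [map_surfRel, List.ofFn_succ, f, Fin.succ_ne_zero]
  intro h
  rw [h, map_one] at hf
  exact absurd hf (by decide)

lemma surfRel_add (j m : ℕ) :
    surfRel (j + m) = FreeGroup.map (Prod.map (Fin.castAdd m) id) (surfRel j) *
      FreeGroup.map (Prod.map (Fin.natAdd j) id) (surfRel m) := by
  rw [map_surfRel, map_surfRel, surfRel, List.ofFn_add, List.prod_append]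
  rfl

namespace SurfaceGroup

open Monoid

variable (j m : ℕ)

abbrev Factor (b : Bool) : Type := FreeGroup (Fin (cond b m j) × Bool)

def boundary : ∀ b, Multiplicative ℤ →* Factor j m b
  | false => zpowersHom _ (surfRel j)
  | true => zpowersHom _ (surfRel m)⁻¹

lemma boundary_injective (hj : j ≠ 0) (hm : m ≠ 0) : ∀ b, Injective (boundary j m b)
  | false => zpowersHom_injective (surfRel_ne_one hj)
  | true => zpowersHom_injective (inv_ne_one.mpr (surfRel_ne_one hm))

abbrev Amalgam : Type := PushoutI (boundary j m)

def freeToAmalgam : FreeGroup (Fin (j + m) × Bool) →* Amalgam j m :=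
  FreeGroup.lift fun p => Fin.addCases
    (fun i => PushoutI.of (φ := boundary j m) false (.of (i, p.2)))
    (fun i => PushoutI.of (φ := boundary j m) true (.of (i, p.2))) p.1

lemma freeToAmalgam_comp_map_castAdd :
    (freeToAmalgam j m).comp (FreeGroup.map (Prod.map (Fin.castAdd m) id)) =
      PushoutI.of (φ := boundary j m) false :=
  FreeGroup.ext_hom _ _ fun p => by simp [freeToAmalgam]

lemma freeToAmalgam_comp_map_natAdd :
    (freeToAmalgam j m).comp (FreeGroup.map (Prod.map (Fin.natAdd j) id)) =
      PushoutI.of (φ := boundary j m) true :=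
  FreeGroup.ext_hom _ _ fun p => by simp [freeToAmalgam]

lemma freeToAmalgam_surfRel : freeToAmalgam j m (surfRel (j + m)) = 1 := by
  have h₁ : PushoutI.of (φ := boundary j m) false (surfRel j) = PushoutI.base _ (.ofAdd 1) := by
    rw [← PushoutI.of_apply_eq_base _ false]
    simp [boundary]
  have h₂ : PushoutI.of (φ := boundary j m) true (surfRel m) = (PushoutI.base _ (.ofAdd 1))⁻¹ := by
    rw [← PushoutI.of_apply_eq_base _ true]
    simp [boundary]
  rw [surfRel_add, map_mul, ← MonoidHom.comp_apply, ← MonoidHom.comp_apply (freeToAmalgam j m),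
    freeToAmalgam_comp_map_castAdd, freeToAmalgam_comp_map_natAdd, h₁, h₂, mul_inv_cancel]

def toAmalgam : SurfaceGroup (j + m) →* Amalgam j m :=
  QuotientGroup.lift _ (freeToAmalgam j m) <| Subgroup.normalClosure_le_normal <| by
    simpa using freeToAmalgam_surfRel j m

lemma toAmalgam_comp_lift_sgen_castAdd :
    (toAmalgam j m).comp
        (FreeGroup.lift fun p : Fin j × Bool => sgen (j + m) (Fin.castAdd m p.1, p.2)) =
      PushoutI.of (φ := boundary j m) false :=
  FreeGroup.ext_hom _ _ fun p => by simp [toAmalgam, sgen, freeToAmalgam]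

theorem lift_sgen_castAdd_injective (hj : j ≠ 0) (hm : m ≠ 0) :
    Injective (FreeGroup.lift fun p : Fin j × Bool => sgen (j + m) (Fin.castAdd m p.1, p.2)) := by
  have := PushoutI.of_injective (boundary_injective j m hj hm) false
  rw [← toAmalgam_comp_lift_sgen_castAdd, MonoidHom.coe_comp] at this
  exact this.of_comp

end SurfaceGroup

/-- For `k ≥ 2` and `1 ≤ j ≤ k-1`, the subgroup `P_j` of the genus-`k` surface group
`Σ_k` is freely generated by the images of `a_1, b_1, …, a_j, b_j`: the natural map
from the free group on these `2j` letters to `Σ_k` is injective. -/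
theorem surface_subgroup_free (k j : ℕ) (hj : 1 ≤ j) (hjk : j ≤ k - 1) :
    Function.Injective
      ⇑(FreeGroup.lift (fun p : Fin j × Bool =>
        sgen k (Fin.castLE (by omega) p.1, p.2))) := by
  obtain ⟨m, rfl⟩ := Nat.exists_eq_add_of_le (show j ≤ k by omega)
  exact SurfaceGroup.lift_sgen_castAdd_injective j m (by omega) (by omega)
end

section
/- The homomorphism from the free group on the three letters a₁, b₁, b₂ to the group G₃, sending each of these letters to the image in G₃ of the corresponding generator, is injective; that is, the subgroup M of G₃ generated by the images of a₁, b₁, b₂ is freely generated by them. -/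
/-! The group `G₃`: quotient of the free group on `a₁, b₁, a₂, b₂` (modelled on
`Fin 4` with `0 = a₁`, `1 = b₁`, `2 = a₂`, `3 = b₂`) by the normal closure of
`[a₁,b₁][a₂,b₂]` and `b₁⁴a₂⁻¹b₁³a₂b₁²a₂⁻¹b₁³a₂`. -/

open scoped commutatorElement

/-- The surface relator `[a₁,b₁][a₂,b₂]`. -/
def rel1 : FreeGroup (Fin 4) :=
  ⁅FreeGroup.of (0 : Fin 4), FreeGroup.of (1 : Fin 4)⁆ * ⁅FreeGroup.of (2 : Fin 4), FreeGroup.of (3 : Fin 4)⁆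

/-- The relator `b₁⁴a₂⁻¹b₁³a₂b₁²a₂⁻¹b₁³a₂`. -/
def rel2 : FreeGroup (Fin 4) :=
  FreeGroup.of (1 : Fin 4) ^ 4 * (FreeGroup.of (2 : Fin 4))⁻¹ * FreeGroup.of (1 : Fin 4) ^ 3 * FreeGroup.of (2 : Fin 4) *
    FreeGroup.of (1 : Fin 4) ^ 2 * (FreeGroup.of (2 : Fin 4))⁻¹ * FreeGroup.of (1 : Fin 4) ^ 3 * FreeGroup.of (2 : Fin 4)

/-- The group `G₃`. -/
abbrev G3 : Type :=
  FreeGroup (Fin 4) ⧸ Subgroup.normalClosure {rel1, rel2}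

/-- The image in `G₃` of the `i`-th generator. -/
def g3 (i : Fin 4) : G3 :=
  QuotientGroup.mk' (Subgroup.normalClosure {rel1, rel2}) (FreeGroup.of i)

/-!
Map `G₃` to an HNN extension of the free group `F` on `a₁, b₁, b₂`, whose stable letter `t`
is the image of `a₂` and conjugates `⟨b₂, b₁⁻³⟩` onto `⟨[b₁,a₁]b₂, b₁³⟩` by
`b₂ ↦ [b₁,a₁]b₂`, `b₁⁻³ ↦ b₁³`. Under this map the first relator becomes
`[a₁,b₁][b₁,a₁] = 1` and the second `b₁⁴b₁⁻³b₁²b₁⁻³ = 1`. Both associated subgroups are free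
on the listed generators: the first by ping-pong in a free product of cyclic groups, the
second because killing `a₁` maps it onto the first. So the HNN extension exists, `F` embeds
into it (Britton's lemma), and this embedding factors through `G₃`.
-/

open Function Monoid

theorem FreeGroup.injective_lift_const_of_not_isOfFinOrder {α G : Type*} [Unique α] [Group G]
    {x : G} (hx : ¬IsOfFinOrder x) : Injective (FreeGroup.lift fun _ : α => x) := by
  have h : ⇑(FreeGroup.lift fun _ : α => x) =
      (fun n : ℤ => x ^ n) ∘ FreeGroup.equivIntOfUnique := by
    funext w
    conv_lhs => rw [← FreeGroup.equivIntOfUnique.symm_apply_apply w]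
    simp [FreeGroup.equivIntOfUnique]
  rw [h]
  exact (injective_zpow_iff_not_isOfFinOrder.mpr hx).comp FreeGroup.equivIntOfUnique.injective

theorem FreeGroup.not_isOfFinOrder_of_default_zpow {α : Type*} [Unique α] {n : ℤ} (hn : n ≠ 0) :
    ¬IsOfFinOrder (of default ^ n : FreeGroup α) := by
  let φ : FreeGroup α →* Multiplicative ℤ := FreeGroup.mulEquivIntOfUnique.toMonoidHom
  have hφ : φ (of default ^ n) = Multiplicative.ofAdd n :=
    congrArg Multiplicative.ofAdd (FreeGroup.equivIntOfUnique.apply_symm_apply n)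
  rw [← (FreeGroup.mulEquivIntOfUnique (α := α)).injective.isOfFinOrder_iff (f := φ), hφ]
  exact not_isOfFinOrder_of_isMulTorsionFree (by simpa using hn)

theorem FreeGroup.injective_lift_coprodI_of_not_isOfFinOrder {κ ι : Type*} {N : ι → Type*}
    [∀ i, Group (N i)] [Nontrivial κ] {e : κ → ι} (he : Injective e) (g : ∀ k, N (e k))
    (hg : ∀ k, ¬IsOfFinOrder (g k)) :
    Injective (FreeGroup.lift fun k => CoprodI.of (g k)) := by
  classical
  let f : ∀ k, FreeGroup Unit →* CoprodI N :=
    fun k => CoprodI.of.comp (FreeGroup.lift fun _ => g k)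
  have hlift : FreeGroup.lift (fun k => CoprodI.of (g k)) =
      (CoprodI.lift f).comp freeGroupEquivCoprodI.toMonoidHom := by
    ext; simp [f]
  rw [hlift, MonoidHom.coe_comp]
  refine Injective.comp ?_ freeGroupEquivCoprodI.injective
  have hf : ∀ k (h : FreeGroup Unit), h ≠ 1 → FreeGroup.lift (fun _ => g k) h ≠ 1 :=
    fun k h hh => (map_ne_one_iff _ (injective_lift_const_of_not_isOfFinOrder (hg k))).mpr hh
  -- Ping-pong: a nontrivial `f k h` sends reduced words not starting in `N (e k)` to ones that do.
  refine CoprodI.lift_injective_of_ping_pong f (Or.inr ⟨Classical.arbitrary κ, ?_⟩)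
    (fun k => {w : CoprodI.Word N | w.fstIdx = some (e k)}) (fun k => ?_) ?_ ?_
  · exact Cardinal.natCast_lt_aleph0.le.trans (Cardinal.aleph0_le_mk _)
  · exact ⟨.cons (g k) .empty (by simp [CoprodI.Word.fstIdx, CoprodI.Word.empty])
      (fun h => hg k (h ▸ IsOfFinOrder.one)), CoprodI.Word.fstIdx_cons _ _ _ _⟩
  · intro k k' hkk'
    rw [Function.onFun, Set.disjoint_left]
    intro w h1 h2
    exact hkk' (he (Option.some_injective _ (h1.symm.trans h2)))
  · intro k k' hkk' h hh
    rintro _ ⟨w, hw, rfl⟩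
    have hw' : w.fstIdx ≠ some (e k) := by
      rw [show w.fstIdx = _ from hw]
      exact fun h => hkk' (he (Option.some_injective _ h)).symm
    show (CoprodI.of _ • w).fstIdx = _
    rw [← CoprodI.Word.cons_eq_smul (h1 := hw') (h2 := hf k h hh)]
    exact CoprodI.Word.fstIdx_cons _ _ _ _

theorem FreeGroup.injective_lift_zpow_of {κ α : Type*} [Nontrivial κ] {e : κ → α}
    (he : Injective e) {n : κ → ℤ} (hn : ∀ k, n k ≠ 0) :
    Injective (FreeGroup.lift fun k => of (e k) ^ n k) := by
  have h : FreeGroup.lift (fun k => of (e k) ^ n k) = freeGroupEquivCoprodI.symm.toMonoidHom.comp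
      (FreeGroup.lift fun k =>
        CoprodI.of (M := fun _ : α => FreeGroup Unit) (i := e k) (of () ^ n k)) := by
    ext; simp
  rw [h, MonoidHom.coe_comp]
  exact freeGroupEquivCoprodI.symm.injective.comp
    (injective_lift_coprodI_of_not_isOfFinOrder he _ fun k =>
      not_isOfFinOrder_of_default_zpow (hn k))

section RangeEquivRange

variable {F H : Type*} [Group F] [Group H] {f g : F →* H} (hf : Injective f) (hg : Injective g)

noncomputable def MonoidHom.rangeEquivRange : f.range ≃* g.range :=
  (MonoidHom.ofInjective hf).symm.trans (MonoidHom.ofInjective hg)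

theorem MonoidHom.rangeEquivRange_apply (x : F) :
    MonoidHom.rangeEquivRange hf hg ⟨f x, x, rfl⟩ = ⟨g x, x, rfl⟩ := by
  rw [MonoidHom.rangeEquivRange, MulEquiv.trans_apply,
    show (⟨f x, x, rfl⟩ : f.range) = MonoidHom.ofInjective hf x from rfl,
    MulEquiv.symm_apply_apply]
  rfl

theorem HNNExtension.t_conj_of_rangeEquivRange (x : F) :
    (t * of (f x) * t⁻¹ : HNNExtension H f.range g.range (MonoidHom.rangeEquivRange hf hg)) =
      of (g x) := by
  rw [← equiv_eq_conj (φ := MonoidHom.rangeEquivRange hf hg) ⟨f x, x, rfl⟩,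
    MonoidHom.rangeEquivRange_apply]

theorem HNNExtension.t_inv_conj_of_rangeEquivRange (x : F) :
    (t⁻¹ * of (g x) * t : HNNExtension H f.range g.range (MonoidHom.rangeEquivRange hf hg)) =
      of (f x) := by
  have h : (MonoidHom.rangeEquivRange hf hg).symm ⟨g x, x, rfl⟩ = ⟨f x, x, rfl⟩ := by
    rw [MulEquiv.symm_apply_eq, MonoidHom.rangeEquivRange_apply]
  rw [← equiv_symm_eq_conj (φ := MonoidHom.rangeEquivRange hf hg) ⟨g x, x, rfl⟩, h]

end RangeEquivRange

namespace G3

open FreeGroup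

abbrev a₁ : FreeGroup (Fin 3) := of 0
abbrev b₁ : FreeGroup (Fin 3) := of 1
abbrev b₂ : FreeGroup (Fin 3) := of 2

def edgeHom (x : FreeGroup (Fin 3)) (n : ℤ) : FreeGroup (Fin 2) →* FreeGroup (Fin 3) :=
  FreeGroup.lift ![x, b₁ ^ n]

theorem edgeHom_b₂_injective {n : ℤ} (hn : n ≠ 0) : Injective (edgeHom b₂ n) := by
  have h : edgeHom b₂ n = FreeGroup.lift fun k => of (![2, 1] k) ^ (![1, n] k) := by
    ext k; fin_cases k <;> simp [edgeHom]
  rw [h]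
  exact injective_lift_zpow_of (by decide) (Fin.forall_fin_two.mpr ⟨one_ne_zero, hn⟩)

theorem edgeHom_commutator_mul_b₂_injective {n : ℤ} (hn : n ≠ 0) :
    Injective (edgeHom (⁅b₁, a₁⁆ * b₂) n) := by
  let killA₁ : FreeGroup (Fin 3) →* FreeGroup (Fin 3) := FreeGroup.lift ![1, b₁, b₂]
  have h : killA₁.comp (edgeHom (⁅b₁, a₁⁆ * b₂) n) = edgeHom b₂ n := by
    ext k; fin_cases k <;> simp [edgeHom, killA₁]
  refine Injective.of_comp (f := killA₁) ?_
  rw [← MonoidHom.coe_comp, h]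
  exact edgeHom_b₂_injective hn

theorem edgeHom_b₂_neg_three_injective : Injective (edgeHom b₂ (-3)) :=
  edgeHom_b₂_injective (by norm_num)

theorem edgeHom_commutator_mul_b₂_three_injective : Injective (edgeHom (⁅b₁, a₁⁆ * b₂) 3) :=
  edgeHom_commutator_mul_b₂_injective (by norm_num)

noncomputable abbrev HNN : Type :=
  HNNExtension (FreeGroup (Fin 3)) _ _
    (MonoidHom.rangeEquivRange edgeHom_b₂_neg_three_injective
      edgeHom_commutator_mul_b₂_three_injective)

noncomputable abbrev t : HNN := HNNExtension.t
noncomputable abbrev ι : FreeGroup (Fin 3) →* HNN := HNNExtension.of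

theorem t_conj_b₂ : t * ι b₂ * t⁻¹ = ι (⁅b₁, a₁⁆ * b₂) :=
  HNNExtension.t_conj_of_rangeEquivRange
    edgeHom_b₂_neg_three_injective edgeHom_commutator_mul_b₂_three_injective (of 0)

theorem t_inv_conj_b₁_pow_three : t⁻¹ * ι b₁ ^ 3 * t = ι b₁ ^ (-3 : ℤ) := by
  rw [← map_pow, ← map_zpow]
  exact HNNExtension.t_inv_conj_of_rangeEquivRange
    edgeHom_b₂_neg_three_injective edgeHom_commutator_mul_b₂_three_injective (of 1)

noncomputable def toHNNFree : FreeGroup (Fin 4) →* HNN :=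
  FreeGroup.lift ![ι a₁, ι b₁, t, ι b₂]

theorem toHNNFree_rel1 : toHNNFree rel1 = 1 := by
  have h : toHNNFree rel1 = ⁅ι a₁, ι b₁⁆ * (t * ι b₂ * t⁻¹) * (ι b₂)⁻¹ := by
    simp [rel1, toHNNFree, commutatorElement_def]; group
  rw [h, t_conj_b₂]
  simp [commutatorElement_def]
  group

theorem toHNNFree_rel2 : toHNNFree rel2 = 1 := by
  have h : toHNNFree rel2 =
      ι b₁ ^ 4 * (t⁻¹ * ι b₁ ^ 3 * t) * ι b₁ ^ 2 * (t⁻¹ * ι b₁ ^ 3 * t) := by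
    simp [rel2, toHNNFree]; group
  rw [h, t_inv_conj_b₁_pow_three]
  group

noncomputable def toHNN : G3 →* HNN :=
  QuotientGroup.lift _ toHNNFree <| Subgroup.normalClosure_le_normal <| by
    rintro r (rfl | rfl)
    exacts [toHNNFree_rel1, toHNNFree_rel2]

end G3

open G3 in
/-- The natural map from the free group on the three letters `a₁, b₁, b₂`
(modelled on `Fin 3`, with `0 ↦ a₁`, `1 ↦ b₁`, `2 ↦ b₂`) to `G₃` is injective;
that is, the subgroup of `G₃` generated by the images of `a₁, b₁, b₂` is freely
generated by them. -/
theorem g3_free_subgroup :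
    Function.Injective
      ⇑(FreeGroup.lift (fun i : Fin 3 => g3 (if i = 0 then 0 else if i = 1 then 1 else 3))) := by
  have h : toHNN.comp
      (FreeGroup.lift fun i : Fin 3 => g3 (if i = 0 then 0 else if i = 1 then 1 else 3)) = ι := by
    ext i; fin_cases i <;> simp [toHNN, toHNNFree, g3]
  refine Injective.of_comp (f := toHNN) ?_
  rw [← MonoidHom.coe_comp, h]
  exact HNNExtension.of_injective _
end

section
/- Let M be the subgroup of G₃ generated by the images of a₁, b₁, b₂, and let g be the image of a₂ in G₃. Then g ∉ M and the intersection M ∩ gMg⁻¹ is not a cyclic subgroup of G₃ (indeed it contains a nonabelian free subgroup); in particular, M is not cyclonormal in G₃. -/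
/-! The group `G₃`: quotient of the free group on `a₁, b₁, a₂, b₂` (modelled on
`Fin 4` with `0 = a₁`, `1 = b₁`, `2 = a₂`, `3 = b₂`) by the normal closure of
`[a₁,b₁][a₂,b₂]` and `b₁⁴a₂⁻¹b₁³a₂b₁²a₂⁻¹b₁³a₂`. -/

open scoped commutatorElement

open Pointwise

/-! Write `a = a₂`, `b = b₁`. The second relator says `b⁴ub²u = 1` for `u = a⁻¹b³a`, which forces
`u² = b⁻⁶`, i.e. `a⁻¹b⁶a = b⁻⁶`; hence `b₁⁶ ∈ M ∩ a₂Ma₂⁻¹`. The surface relator gives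
`a₂b₂a₂⁻¹ = [b₁,a₁]b₂ ∈ M`, so `a₂b₂a₂⁻¹` lies in the intersection as well. These two elements do
not commute, as the representation `b₁ ↦ (0 1 2 3)`, `b₂ ↦ (0 1)`, `aᵢ ↦ 1` into `S₄` shows, so the
intersection is not cyclic. Finally `a₂ ∉ M` because the exponent sum of `a₂` modulo 2 is a
homomorphism vanishing on `M`. -/

section Group

variable {G : Type*} [Group G]

lemma sq_eq_pow_six_inv_of_mul_eq_one {b u : G} (h : b ^ 4 * u * b ^ 2 * u = 1) :
    u ^ 2 = (b ^ 6)⁻¹ := by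
  -- The rotated relator `b²ub²ub² = 1` gives `x² = b⁻²` for `x = b²u`, so `b²` commutes with `u`.
  set x := b ^ 2 * u with hx
  have hx2 : x ^ 2 = (b ^ 2)⁻¹ := by
    refine eq_inv_of_mul_eq_one_left ?_
    calc x ^ 2 * b ^ 2 = (b ^ 2)⁻¹ * (b ^ 4 * u * b ^ 2 * u) * b ^ 2 := by rw [hx, sq]; group
      _ = 1 := by rw [h]; group
  have hbx : Commute (b ^ 2) x := by
    simpa [hx2] using ((Commute.refl x).pow_left 2).inv_left
  have hbu : Commute (b ^ 2) u := by
    simpa [hx] using (Commute.inv_right (Commute.refl (b ^ 2))).mul_right hbx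
  refine eq_inv_of_mul_eq_one_right ?_
  calc b ^ 6 * u ^ 2 = b ^ 4 * (b ^ 2 * u) * u := by rw [sq]; group
    _ = 1 := by rw [hbu.eq, ← h]; group

lemma inv_mul_pow_six_mul_eq_inv {a b : G}
    (h : b ^ 4 * a⁻¹ * b ^ 3 * a * b ^ 2 * a⁻¹ * b ^ 3 * a = 1) :
    a⁻¹ * b ^ 6 * a = (b ^ 6)⁻¹ := by
  rw [← sq_eq_pow_six_inv_of_mul_eq_one (u := a⁻¹ * b ^ 3 * a) (by rw [← h]; group), sq]
  group

lemma Subgroup.not_exists_eq_zpowers_of_not_commute {H : Subgroup G} {x y : G} (hx : x ∈ H)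
    (hy : y ∈ H) (hxy : ¬Commute x y) : ¬∃ z, H = Subgroup.zpowers z := by
  rintro ⟨z, rfl⟩
  exact hxy (setLike_mul_comm hx hy)

lemma Subgroup.mem_conj_smul_iff {H : Subgroup G} {g x : G} :
    x ∈ MulAut.conj g • H ↔ g⁻¹ * x * g ∈ H := by
  simp [Subgroup.mem_pointwise_smul_iff_inv_smul_mem]

end Group

namespace G3

section lift

variable {H : Type*} [Group H] (f : Fin 4 → H)
  (hf : ∀ r ∈ ({rel1, rel2} : Set (FreeGroup (Fin 4))), FreeGroup.lift f r = 1)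

def lift : G3 →* H :=
  PresentedGroup.toGroup hf

lemma lift_apply_g3 (i : Fin 4) : lift f hf (g3 i) = f i :=
  PresentedGroup.toGroup.of hf

end lift

lemma freeGroupLift_g3_eq_one {r : FreeGroup (Fin 4)}
    (hr : r ∈ ({rel1, rel2} : Set (FreeGroup (Fin 4)))) : FreeGroup.lift g3 r = 1 := by
  rw [show FreeGroup.lift g3 = QuotientGroup.mk' _ from
    FreeGroup.ext_hom _ _ fun _ ↦ by simp [g3]]
  exact PresentedGroup.one_of_mem hr

lemma commutator_mul_commutator_eq_one : ⁅g3 0, g3 1⁆ * ⁅g3 2, g3 3⁆ = 1 := by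
  simpa [rel1] using freeGroupLift_g3_eq_one (Set.mem_insert rel1 _)

lemma conj_pow_six_eq_inv : (g3 2)⁻¹ * g3 1 ^ 6 * g3 2 = (g3 1 ^ 6)⁻¹ :=
  inv_mul_pow_six_mul_eq_inv <| by
    simpa [rel2] using freeGroupLift_g3_eq_one (Set.mem_insert_of_mem rel1 rfl)

lemma conj_b₂_eq : g3 2 * g3 3 * (g3 2)⁻¹ = ⁅g3 1, g3 0⁆ * g3 3 := by
  rw [← commutatorElement_inv, ← eq_inv_of_mul_eq_one_right commutator_mul_commutator_eq_one,
    commutatorElement_def]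
  group

def a₂Parity : G3 →* Multiplicative (ZMod 2) :=
  lift ![1, 1, .ofAdd 1, 1] <| by
    rintro r (rfl | rfl) <;> simp [rel1, rel2]

def permRep : G3 →* Equiv.Perm (Fin 4) :=
  lift ![1, finRotate 4, 1, Equiv.swap 0 1] <| by
    rintro r (rfl | rfl)
    · simp [rel1]
    · simp only [rel2, map_mul, map_pow, map_inv, FreeGroup.lift_apply_of]
      ext i; fin_cases i <;> rfl

local notation "M" => Subgroup.closure ({g3 0, g3 1, g3 3} : Set G3)

lemma g3_mem_closure {i : Fin 4} (hi : i ≠ 2) : g3 i ∈ M :=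
  Subgroup.subset_closure (by fin_cases i <;> simp_all)

lemma g3_two_not_mem_closure : g3 2 ∉ M := by
  have hM : M ≤ a₂Parity.ker :=
    (Subgroup.closure_le _).2 (by rintro _ (rfl | rfl | rfl) <;> simp [a₂Parity, lift_apply_g3])
  intro h
  simpa [a₂Parity, lift_apply_g3] using hM h

lemma pow_six_mem_inf_conj : g3 1 ^ 6 ∈ M ⊓ MulAut.conj (g3 2) • M := by
  have hb : g3 1 ^ 6 ∈ M := pow_mem (g3_mem_closure (by decide)) 6
  refine Subgroup.mem_inf.2 ⟨hb, Subgroup.mem_conj_smul_iff.2 ?_⟩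
  rw [conj_pow_six_eq_inv]
  exact inv_mem hb

lemma conj_b₂_mem_inf_conj : g3 2 * g3 3 * (g3 2)⁻¹ ∈ M ⊓ MulAut.conj (g3 2) • M := by
  have ha₁ : g3 0 ∈ M := g3_mem_closure (by decide)
  have hb₁ : g3 1 ∈ M := g3_mem_closure (by decide)
  have hb₂ : g3 3 ∈ M := g3_mem_closure (by decide)
  refine Subgroup.mem_inf.2 ⟨?_, Subgroup.mem_conj_smul_iff.2 ?_⟩
  · rw [conj_b₂_eq, commutatorElement_def]
    exact mul_mem (mul_mem (mul_mem (mul_mem hb₁ ha₁) (inv_mem hb₁)) (inv_mem ha₁)) hb₂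
  · rwa [show (g3 2)⁻¹ * (g3 2 * g3 3 * (g3 2)⁻¹) * g3 2 = g3 3 by group]

lemma not_commute_pow_six_conj_b₂ : ¬Commute (g3 1 ^ 6) (g3 2 * g3 3 * (g3 2)⁻¹) := by
  intro h
  have := h.map permRep
  simp only [map_mul, map_inv, map_pow, permRep, lift_apply_g3] at this
  exact absurd this.eq (by decide)

end G3

/-- Let `M` be the subgroup of `G₃` generated by the images of `a₁, b₁, b₂`,
and let `g` be the image of `a₂`. Then `g ∉ M` and `M ∩ g M g⁻¹` is not cyclic;
in particular `M` is not cyclonormal in `G₃`. -/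
theorem g3_not_cyclonormal :
    g3 2 ∉ Subgroup.closure {g3 0, g3 1, g3 3} ∧
    ¬ ∃ z, Subgroup.closure {g3 0, g3 1, g3 3}
        ⊓ MulAut.conj (g3 2) • Subgroup.closure {g3 0, g3 1, g3 3}
      = Subgroup.zpowers z :=
  ⟨G3.g3_two_not_mem_closure,
    Subgroup.not_exists_eq_zpowers_of_not_commute G3.pow_six_mem_inf_conj
      G3.conj_b₂_mem_inf_conj G3.not_commute_pow_six_conj_b₂⟩
end

section
/- (Collins) In the one-relator group H obtained as the quotient of the free group on two generators x, y by the normal closure of the element x⁴y⁻³x²y⁻³, the images of the generators satisfy x⁶ = y⁶. -/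
/-! Put `u = x²` and `c = y⁻³`. The relator says `u (uc)² = 1`, so `(uc)² = u⁻¹`; hence `u` commutes
with `uc`, and therefore with `c`. The relator then reads `u³c² = 1`, that is `x⁶ = y⁶`. -/

section Group

variable {G : Type*} [Group G] {u c : G}

theorem commute_of_mul_mul_sq_eq_one (h : u * (u * c) ^ 2 = 1) : Commute u c := by
  have hsq : (u * c) ^ 2 = u⁻¹ := eq_inv_of_mul_eq_one_right h
  have hw : Commute u (u * c) := by
    have := Commute.self_pow (u * c) 2
    rw [hsq, Commute.inv_right_iff] at this
    exact this.symm
  simpa using (Commute.refl u).inv_right.mul_right hw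

theorem pow_three_mul_sq_eq_one_of_mul_mul_sq_eq_one (h : u * (u * c) ^ 2 = 1) :
    u ^ 3 * c ^ 2 = 1 := by
  rw [← h, (commute_of_mul_mul_sq_eq_one h).mul_pow]
  group

theorem pow_six_eq_pow_six_of_collins_relator {x y : G}
    (h : x ^ 4 * y ^ (-3 : ℤ) * x ^ 2 * y ^ (-3 : ℤ) = 1) : x ^ 6 = y ^ 6 := by
  have hrel : x ^ 2 * (x ^ 2 * y ^ (-3 : ℤ)) ^ 2 = 1 := by
    rw [← h, sq (x ^ 2 * _)]
    group
  have h6 := pow_three_mul_sq_eq_one_of_mul_mul_sq_eq_one hrel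
  rw [← mul_inv_eq_one, ← h6]
  group

end Group

/-- **Collins**: in the one-relator group `H = ⟨x, y : x⁴y⁻³x²y⁻³⟩` (modelled on
`Fin 2` with `0 = x`, `1 = y`), the images of the generators satisfy `x⁶ = y⁶`. -/
theorem collins_x6_eq_y6 :
    QuotientGroup.mk' (Subgroup.normalClosure
        {FreeGroup.of (0 : Fin 2) ^ 4 * FreeGroup.of (1 : Fin 2) ^ (-3 : ℤ) *
          FreeGroup.of (0 : Fin 2) ^ 2 * FreeGroup.of (1 : Fin 2) ^ (-3 : ℤ)})
        (FreeGroup.of (0 : Fin 2)) ^ 6 =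
    QuotientGroup.mk' (Subgroup.normalClosure
        {FreeGroup.of (0 : Fin 2) ^ 4 * FreeGroup.of (1 : Fin 2) ^ (-3 : ℤ) *
          FreeGroup.of (0 : Fin 2) ^ 2 * FreeGroup.of (1 : Fin 2) ^ (-3 : ℤ)})
        (FreeGroup.of (1 : Fin 2)) ^ 6 := by
  apply pow_six_eq_pow_six_of_collins_relator
  simp only [← map_pow, ← map_zpow, ← map_mul]
  exact (QuotientGroup.eq_one_iff _).2 (Subgroup.subset_normalClosure rfl)
end
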